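/- arXiv:2508.11507 — 3 statements merged into one kernel-verified Lean document; each statement's English description precedes it below -/
import Mathlib

section
/- Let γ > 0 be a real number. Then (2√2·(1+γ))/√(1+γ²−γ√2) ≤ 4·√(2+√2), and in particular this quantity is strictly less than 8. -/
open Real

theorem stmt_0 (γ : ℝ) (hγ : 0 < γ) :
    2 * Real.sqrt 2 * (1 + γ) / Real.sqrt (1 + γ ^ 2 - γ * Real.sqrt 2)
      ≤ 4 * Real.sqrt (2 + Real.sqrt 2) ∧
    4 * Real.sqrt (2 + Real.sqrt 2) < 8 := by
  have hs2 : Real.sqrt 2 ^ 2 = 2 := Real.sq_sqrt (by norm_num)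
  have hs0 : (0:ℝ) ≤ Real.sqrt 2 := Real.sqrt_nonneg 2
  have hslt : Real.sqrt 2 < 2 := by nlinarith
  have hd : 0 < 1 + γ ^ 2 - γ * Real.sqrt 2 := by nlinarith [sq_nonneg (γ - 1)]
  constructor
  · rw [div_le_iff₀ (Real.sqrt_pos.mpr hd)]
    have hx : (0:ℝ) ≤ 2 + Real.sqrt 2 := by linarith
    rw [show 4 * Real.sqrt (2 + Real.sqrt 2) * Real.sqrt (1 + γ ^ 2 - γ * Real.sqrt 2)
        = 4 * Real.sqrt ((2 + Real.sqrt 2) * (1 + γ ^ 2 - γ * Real.sqrt 2)) by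
      rw [Real.sqrt_mul hx, mul_assoc]]
    have hL : 0 ≤ 2 * Real.sqrt 2 * (1 + γ) := by positivity
    have hR : 0 ≤ 4 * Real.sqrt ((2 + Real.sqrt 2) * (1 + γ ^ 2 - γ * Real.sqrt 2)) := by
      positivity
    have key : (2 * Real.sqrt 2 * (1 + γ)) ^ 2
        ≤ (4 * Real.sqrt ((2 + Real.sqrt 2) * (1 + γ ^ 2 - γ * Real.sqrt 2))) ^ 2 := by
      have hX : 0 ≤ (2 + Real.sqrt 2) * (1 + γ ^ 2 - γ * Real.sqrt 2) := by positivity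
      rw [mul_pow, mul_pow, mul_pow, Real.sq_sqrt hX]
      nlinarith [sq_nonneg (γ - 1), mul_nonneg hs0 (sq_nonneg (γ - 1))]
    exact (pow_le_pow_iff_left₀ hL hR two_ne_zero).mp key
  · have : Real.sqrt (2 + Real.sqrt 2) < 2 := by
      rw [Real.sqrt_lt' (by norm_num)]
      nlinarith
    linarith
end

section
/- Let P be a set of n points placed so that a and b lie at antipodal corners of a square and the remaining n − 2 points lie in the interior of the diagonal segment between the other two corners (more precisely, on the diagonal not containing a and b). Then for every point p on the diagonal, the open quarter-plane cone of angular width π/2 at p containing a contains no other point of P, and likewise for b; consequently the Yao₄ graph of P contains all 2(n−2) edges {p,a} and {p,b} for p on the diagonal, plus the n − 3 edges between consecutive diagonal points, for a total of at least 3n − 7 edges. -/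
/-- Membership of `q` in the `i`-th quarter-plane cone at `p` (for the Yao₄
construction), where cone `i` consists of the points `q ≠ p` such that the angle
of `q - p` lies in `[iπ/2, (i+1)π/2)`. -/
def inCone (i : Fin 4) (p q : ℝ × ℝ) : Prop :=
  match i with
  | 0 => 0 < q.1 - p.1 ∧ 0 ≤ q.2 - p.2
  | 1 => q.1 - p.1 ≤ 0 ∧ 0 < q.2 - p.2
  | 2 => q.1 - p.1 < 0 ∧ q.2 - p.2 ≤ 0
  | 3 => 0 ≤ q.1 - p.1 ∧ q.2 - p.2 < 0

/-- `q` is a Yao₄ neighbor of `p` in `P`: for some cone at `p`, the point `q`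
lies in the cone and is nearest to `p` among the points of `P` in that cone. -/
def yaoEdge (P : Finset (ℝ × ℝ)) (p q : ℝ × ℝ) : Prop :=
  p ∈ P ∧ q ∈ P ∧ ∃ i : Fin 4, inCone i p q ∧
    ∀ r ∈ P, inCone i p r → dist p q ≤ dist p r

/-- The edge set of the Yao₄ graph of `P`. -/
def yaoEdges (P : Finset (ℝ × ℝ)) : Set (Sym2 (ℝ × ℝ)) :=
  {e | ∃ p q : ℝ × ℝ, e = s(p, q) ∧ (yaoEdge P p q ∨ yaoEdge P q p)}

theorem stmt_15 (P : Finset (ℝ × ℝ)) (a b : ℝ × ℝ)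
    (ha : a = (0, 1)) (hb : b = (1, 0)) (haP : a ∈ P) (hbP : b ∈ P)
    (hdiag : ∀ p ∈ P, p ≠ a → p ≠ b → ∃ t : ℝ, 0 < t ∧ t < 1 ∧ p = (t, t)) :
    -- the cone at each diagonal point containing `a` contains no other point of `P`,
    -- and likewise for `b`
    (∀ p ∈ P, (∃ t : ℝ, 0 < t ∧ t < 1 ∧ p = (t, t)) →
      (∀ q ∈ P, inCone 1 p q → q = a) ∧ (∀ q ∈ P, inCone 3 p q → q = b)) ∧
    -- consequently `{p, a}` and `{p, b}` are Yao₄ edges for every diagonal point `p`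
    (∀ p ∈ P, (∃ t : ℝ, 0 < t ∧ t < 1 ∧ p = (t, t)) →
      s(p, a) ∈ yaoEdges P ∧ s(p, b) ∈ yaoEdges P) ∧
    -- and the Yao₄ graph has at least `3n - 7` edges
    3 * P.card - 7 ≤ (yaoEdges P).ncard := by
  classical
  subst ha hb
  have hab : ((0:ℝ),(1:ℝ)) ≠ ((1:ℝ),(0:ℝ)) := by norm_num [Prod.ext_iff]
  have hclass : ∀ q ∈ P, q = ((0:ℝ),(1:ℝ)) ∨ q = ((1:ℝ),(0:ℝ)) ∨
      ∃ t : ℝ, 0 < t ∧ t < 1 ∧ q = (t, t) := by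
    intro q hq
    by_cases h1 : q = ((0:ℝ),(1:ℝ))
    · exact Or.inl h1
    by_cases h2 : q = ((1:ℝ),(0:ℝ))
    · exact Or.inr (Or.inl h2)
    exact Or.inr (Or.inr (hdiag q hq h1 h2))
  -- cone lemmas
  have cone1 : ∀ t : ℝ, 0 < t → t < 1 → ∀ q ∈ P, inCone 1 (t,t) q → q = ((0:ℝ),(1:ℝ)) := by
    intro t ht0 ht1 q hq hc
    rcases hclass q hq with h | h | ⟨s, hs0, hs1, rfl⟩
    · exact h
    · subst h; simp [inCone] at hc; linarith [hc.2]
    · simp [inCone] at hc; linarith [hc.1, hc.2]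
  have cone3 : ∀ t : ℝ, 0 < t → t < 1 → ∀ q ∈ P, inCone 3 (t,t) q → q = ((1:ℝ),(0:ℝ)) := by
    intro t ht0 ht1 q hq hc
    rcases hclass q hq with h | h | ⟨s, hs0, hs1, rfl⟩
    · subst h; simp [inCone] at hc; linarith [hc.1]
    · exact h
    · simp [inCone] at hc; linarith [hc.1, hc.2]
  have cone0 : ∀ t : ℝ, 0 < t → t < 1 → ∀ q ∈ P, inCone 0 (t,t) q →
      ∃ s : ℝ, 0 < s ∧ s < 1 ∧ q = (s, s) ∧ t < s := by
    intro t ht0 ht1 q hq hc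
    rcases hclass q hq with h | h | ⟨s, hs0, hs1, rfl⟩
    · subst h; simp [inCone] at hc; linarith [hc.1]
    · subst h; simp [inCone] at hc; linarith [hc.2]
    · simp [inCone] at hc; exact ⟨s, hs0, hs1, rfl, by linarith [hc.1]⟩
  have yaoA : ∀ p ∈ P, (∃ t : ℝ, 0 < t ∧ t < 1 ∧ p = (t, t)) →
      yaoEdge P p ((0:ℝ),(1:ℝ)) := by
    rintro p hp ⟨t, ht0, ht1, rfl⟩
    refine ⟨hp, haP, 1, ?_, ?_⟩
    · simp [inCone]; constructor <;> linarith
    · intro r hr hcr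
      rw [cone1 t ht0 ht1 r hr hcr]
  have yaoB : ∀ p ∈ P, (∃ t : ℝ, 0 < t ∧ t < 1 ∧ p = (t, t)) →
      yaoEdge P p ((1:ℝ),(0:ℝ)) := by
    rintro p hp ⟨t, ht0, ht1, rfl⟩
    refine ⟨hp, hbP, 3, ?_, ?_⟩
    · simp [inCone]; constructor <;> linarith
    · intro r hr hcr
      rw [cone3 t ht0 ht1 r hr hcr]
  refine ⟨?_, ?_, ?_⟩
  · rintro p hp ⟨t, ht0, ht1, rfl⟩
    exact ⟨cone1 t ht0 ht1, cone3 t ht0 ht1⟩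
  · intro p hp hdp
    exact ⟨⟨p, _, rfl, Or.inl (yaoA p hp hdp)⟩, ⟨p, _, rfl, Or.inl (yaoB p hp hdp)⟩⟩
  -- counting
  · set D : Finset (ℝ × ℝ) := (P.erase ((0:ℝ),(1:ℝ))).erase ((1:ℝ),(0:ℝ)) with hD
    have hmemD : ∀ p, p ∈ D ↔ p ∈ P ∧ p ≠ ((0:ℝ),(1:ℝ)) ∧ p ≠ ((1:ℝ),(0:ℝ)) := by
      intro p
      simp [hD, Finset.mem_erase]
      tauto
    have hDdiag : ∀ p ∈ D, ∃ t : ℝ, 0 < t ∧ t < 1 ∧ p = (t, t) := by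
      intro p hp
      rcases (hmemD p).1 hp with ⟨hpP, h1, h2⟩
      exact hdiag p hpP h1 h2
    have hDcard : D.card = P.card - 2 := by
      have hbmem : ((1:ℝ),(0:ℝ)) ∈ P.erase ((0:ℝ),(1:ℝ)) :=
        Finset.mem_erase.2 ⟨Ne.symm hab, hbP⟩
      rw [hD, Finset.card_erase_of_mem hbmem, Finset.card_erase_of_mem haP]
      omega
    have hfin : (yaoEdges P).Finite := by
      apply Set.Finite.subset (Finset.finite_toSet ((P ×ˢ P).image fun x => s(x.1, x.2)))
      rintro e ⟨p, q, rfl, h | h⟩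
      · exact Finset.mem_coe.2 (Finset.mem_image.2 ⟨(p, q), Finset.mem_product.2 ⟨h.1, h.2.1⟩, rfl⟩)
      · exact Finset.mem_coe.2 (Finset.mem_image.2 ⟨(p, q), Finset.mem_product.2 ⟨h.2.1, h.1⟩, rfl⟩)
    by_cases hne : D.Nonempty
    swap
    · have : D.card = 0 := Finset.card_eq_zero.2 (Finset.not_nonempty_iff_eq_empty.1 hne)
      have hP2 : P.card ≤ 2 := by omega
      omega
    obtain ⟨m, hmD, hmax⟩ := D.exists_max_image Prod.fst hne
    -- nearest cone-0 neighbor for each non-maximal diagonal point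
    have hF : ∀ p ∈ D.erase m, ∃ y : ℝ × ℝ, yaoEdge P p y ∧ p.1 < y.1 ∧
        y ≠ ((0:ℝ),(1:ℝ)) ∧ y ≠ ((1:ℝ),(0:ℝ)) := by
      intro p hp
      obtain ⟨hpm, hpD⟩ := Finset.mem_erase.1 hp
      obtain ⟨t, ht0, ht1, rfl⟩ := hDdiag p hpD
      obtain ⟨tm, htm0, htm1, hm⟩ := hDdiag m hmD
      have htlt : t < tm := by
        have hle : t ≤ m.1 := hmax _ hpD
        rw [hm] at hle; simp at hle
        rcases lt_or_eq_of_le hle with h | h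
        · exact h
        · exact absurd (by rw [hm, h] : (t,t) = m) hpm
      have hmcone : inCone 0 (t,t) m := by
        rw [hm]; simp [inCone]; constructor <;> linarith
      have hQne : (P.filter (fun q => inCone 0 (t,t) q)).Nonempty :=
        ⟨m, Finset.mem_filter.2 ⟨(hmemD m).1 hmD |>.1, hmcone⟩⟩
      obtain ⟨y, hy, hymin⟩ := Finset.exists_min_image _ (fun q => dist (t,t) q) hQne
      obtain ⟨hyP, hyc⟩ := Finset.mem_filter.1 hy
      obtain ⟨s, hs0, hs1, rfl, hts⟩ := cone0 t ht0 ht1 y hyP hyc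
      refine ⟨(s,s), ⟨(hmemD _ ).1 hpD |>.1, hyP, 0, hyc, ?_⟩, by simpa using hts, ?_, ?_⟩
      · intro r hr hcr
        exact hymin r (Finset.mem_filter.2 ⟨hr, hcr⟩)
      · simp [Prod.ext_iff]; intro h; linarith
      · simp [Prod.ext_iff]; intro h; linarith
    choose g hg using hF
    set S1 : Finset (Sym2 (ℝ × ℝ)) := D.image (fun p => s(p, ((0:ℝ),(1:ℝ)))) with hS1
    set S2 : Finset (Sym2 (ℝ × ℝ)) := D.image (fun p => s(p, ((1:ℝ),(0:ℝ)))) with hS2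
    set S3 : Finset (Sym2 (ℝ × ℝ)) :=
      (D.erase m).attach.image (fun p => s(p.1, g p.1 p.2)) with hS3
    have hS1card : S1.card = D.card := by
      rw [hS1, Finset.card_image_of_injOn]
      intro p hp q hq h
      rcases Sym2.eq_iff.1 h with ⟨h1, _⟩ | ⟨h1, h2⟩
      · exact h1
      · exact h1.trans h2
    have hS2card : S2.card = D.card := by
      rw [hS2, Finset.card_image_of_injOn]
      intro p hp q hq h
      rcases Sym2.eq_iff.1 h with ⟨h1, _⟩ | ⟨h1, h2⟩
      · exact h1
      · exact h1.trans h2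
    have hS3card : S3.card = (D.erase m).card := by
      rw [hS3, Finset.card_image_of_injOn, Finset.card_attach]
      rintro ⟨p, hp⟩ _ ⟨q, hq⟩ _ h
      rcases Sym2.eq_iff.1 h with ⟨h1, _⟩ | ⟨h1, h2⟩
      · exact Subtype.ext h1
      · exfalso
        have hpg : p.1 < (g p hp).1 := (hg p hp).2.1
        have hqg : q.1 < (g q hq).1 := (hg q hq).2.1
        rw [h2] at hpg; rw [← h1] at hqg
        linarith
    have hsub1 : ∀ e ∈ S1 ∪ S2 ∪ S3, e ∈ yaoEdges P := by
      intro e he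
      rcases Finset.mem_union.1 he with he | he
      rcases Finset.mem_union.1 he with he | he
      · obtain ⟨p, hp, rfl⟩ := Finset.mem_image.1 he
        exact ⟨p, _, rfl, Or.inl (yaoA p ((hmemD p).1 hp).1 (hDdiag p hp))⟩
      · obtain ⟨p, hp, rfl⟩ := Finset.mem_image.1 he
        exact ⟨p, _, rfl, Or.inl (yaoB p ((hmemD p).1 hp).1 (hDdiag p hp))⟩
      · obtain ⟨⟨p, hp⟩, _, rfl⟩ := Finset.mem_image.1 he
        exact ⟨p, _, rfl, Or.inl (hg p hp).1⟩
    have hd12 : Disjoint S1 S2 := by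
      rw [Finset.disjoint_left]
      rintro e he1 he2
      obtain ⟨p, hp, rfl⟩ := Finset.mem_image.1 he1
      obtain ⟨q, hq, hqe⟩ := Finset.mem_image.1 he2
      rcases Sym2.eq_iff.1 hqe with ⟨_, h2⟩ | ⟨h1, h2⟩
      · exact hab.symm h2
      · exact ((hmemD q).1 hq).2.1 h1
    have hd123 : Disjoint (S1 ∪ S2) S3 := by
      rw [Finset.disjoint_left]
      rintro e he1 he3
      obtain ⟨⟨q, hq⟩, _, rfl⟩ := Finset.mem_image.1 he3
      have hgq := hg q hq
      have hqD := (Finset.mem_erase.1 hq).2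
      rcases Finset.mem_union.1 he1 with he | he
      · obtain ⟨p, hp, hpe⟩ := Finset.mem_image.1 he
        rcases Sym2.eq_iff.1 hpe with ⟨_, h2⟩ | ⟨h1, h2⟩
        · exact hgq.2.2.1 h2.symm
        · exact ((hmemD q).1 hqD).2.1 h2.symm
      · obtain ⟨p, hp, hpe⟩ := Finset.mem_image.1 he
        rcases Sym2.eq_iff.1 hpe with ⟨_, h2⟩ | ⟨h1, h2⟩
        · exact hgq.2.2.2 h2.symm
        · exact ((hmemD q).1 hqD).2.2 h2.symm
    have hcards : (S1 ∪ S2 ∪ S3).card = 2 * D.card + (D.erase m).card := by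
      rw [Finset.card_union_of_disjoint hd123, Finset.card_union_of_disjoint hd12,
        hS1card, hS2card, hS3card]
      ring
    have hle : (S1 ∪ S2 ∪ S3).card ≤ (yaoEdges P).ncard := by
      have : ((S1 ∪ S2 ∪ S3 : Finset (Sym2 (ℝ × ℝ))) : Set (Sym2 (ℝ × ℝ))) ⊆ yaoEdges P := by
        intro e he
        exact hsub1 e (Finset.mem_coe.1 he)
      calc (S1 ∪ S2 ∪ S3).card = ((S1 ∪ S2 ∪ S3 : Finset (Sym2 (ℝ × ℝ))) : Set (Sym2 (ℝ × ℝ))).ncard :=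
            (Set.ncard_coe_finset _).symm
        _ ≤ (yaoEdges P).ncard := Set.ncard_le_ncard this hfin
    have hDem : (D.erase m).card = D.card - 1 := Finset.card_erase_of_mem hmD
    have hD1 : 1 ≤ D.card := Finset.card_pos.2 hne
    omega
end

section
/- Let ℓ ≥ 1 be an integer. In a graph obtained from a rooted tree by the following re-routing, every vertex u has degree at most 1 + 3(ℓ+1): each vertex keeps its edge to its parent; for each vertex u and each integer j, let M_j^u denote the set of children of u added at the j-th nonempty level (with |M_j^u| ≤ 3 for all j); for j ≤ ℓ, the edges from M_j^u to u are kept; for j > ℓ, each vertex of M_j^u is re-attached to a single chosen vertex w ∈ M_{j−ℓ}^u. -/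
theorem stmt_17 {V : Type*} [Fintype V] [DecidableEq V] (ℓ : ℕ) (hℓ : 1 ≤ ℓ)
    -- a rooted tree, given by its root `r` and parent function `par` (with `par r = r`)
    (r : V) (par : V → V) (hroot : par r = r)
    -- the children of each vertex `u` are partitioned into groups `M u 1, M u 2, …`,
    -- each group of size at most 3
    (M : V → ℕ → Finset V)
    (hM3 : ∀ u j, (M u j).card ≤ 3)
    (hMpar : ∀ u j v, v ∈ M u j → par v = u ∧ v ≠ u ∧ 1 ≤ j)
    (hMdisj : ∀ u₁ j₁ u₂ j₂ v, v ∈ M u₁ j₁ → v ∈ M u₂ j₂ → u₁ = u₂ ∧ j₁ = j₂)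
    -- `grp v` is the index of the group (of its parent) containing `v`
    (grp : V → ℕ) (hgrp : ∀ v, v ≠ r → v ∈ M (par v) (grp v))
    -- for `j > ℓ`, the vertices of `M u j` are re-attached to the chosen
    -- vertex `w u j ∈ M u (j - ℓ)`
    (w : V → ℕ → V)
    (hw : ∀ u j, ℓ < j → (M u j).Nonempty → w u j ∈ M u (j - ℓ))
    -- the new parent function after re-routing
    (npar : V → V)
    (hnpar : ∀ v, v ≠ r →
      npar v = if grp v ≤ ℓ then par v else w (par v) (grp v)) :
    -- every vertex has degree at most `1 + 3(ℓ+1)` in the re-routed tree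
    ∀ u : V, ({v : V | v ≠ r ∧ v ≠ u ∧ npar v = u}.ncard + (if u = r then 0 else 1))
      ≤ 1 + 3 * (ℓ + 1) := by
  intro u
  set T : Finset V := (Finset.Icc 1 ℓ).biUnion (M u) ∪ M (par u) (grp u + ℓ) with hT
  have hsub : {v : V | v ≠ r ∧ v ≠ u ∧ npar v = u} ⊆ ↑T := by
    intro v hv
    obtain ⟨hvr, hvu, hnv⟩ := hv
    rw [hnpar v hvr] at hnv
    simp only [hT, Finset.coe_union, Finset.coe_biUnion, Set.mem_union]
    by_cases hle : grp v ≤ ℓ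
    · rw [if_pos hle] at hnv
      left
      have hvmem := hgrp v hvr
      rw [hnv] at hvmem
      have h1 := (hMpar u (grp v) v hvmem).2.2
      exact Set.mem_biUnion (by simp [Finset.mem_Icc, h1, hle]) hvmem
    · rw [if_neg hle] at hnv
      right
      push_neg at hle
      have hvmem := hgrp v hvr
      have humem : u ∈ M (par v) (grp v - ℓ) := by
        rw [← hnv]; exact hw (par v) (grp v) hle ⟨v, hvmem⟩
      obtain ⟨hpu, hune, _⟩ := hMpar (par v) (grp v - ℓ) u humem
      have hur : u ≠ r := by
        intro h; rw [h] at hpu hune; rw [hroot] at hpu; exact hune hpu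
      have humem' := hgrp u hur
      obtain ⟨hp, hj⟩ := hMdisj (par v) (grp v - ℓ) (par u) (grp u) u humem humem'
      have : grp v = grp u + ℓ := by omega
      rw [← hp, ← this]
      exact hvmem
  have hcard : ({v : V | v ≠ r ∧ v ≠ u ∧ npar v = u}).ncard ≤ T.card := by
    calc ({v : V | v ≠ r ∧ v ≠ u ∧ npar v = u}).ncard
        ≤ (↑T : Set V).ncard := Set.ncard_le_ncard hsub (Set.toFinite _)
      _ = T.card := by simp [Set.ncard_coe_finset]
  have hTcard : T.card ≤ 3 * ℓ + 3 := by
    calc T.card ≤ ((Finset.Icc 1 ℓ).biUnion (M u)).card + (M (par u) (grp u + ℓ)).card :=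
          Finset.card_union_le _ _
      _ ≤ (∑ j ∈ Finset.Icc 1 ℓ, (M u j).card) + 3 := by
          gcongr
          exacts [Finset.card_biUnion_le, hM3 _ _]
      _ ≤ (∑ j ∈ Finset.Icc 1 ℓ, 3) + 3 := by gcongr with j hj; exact hM3 _ _
      _ = 3 * ℓ + 3 := by simp [Nat.Icc_eq_range', mul_comm]
  have : (if u = r then 0 else 1) ≤ 1 := by split <;> omega
  omega
end
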